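/- arXiv:2605.19619 — 5 statements merged into one kernel-verified Lean document; each statement's English description precedes it below -/
import Mathlib

section
/- Let η > 0, λ ≥ 0 with η·λ ≤ 1, and κ > 0. Let W₀, W₀', M, M' be real m×n matrices, U, U' real m×r matrices with ‖U‖₂ ≤ 1, and V, V' real n×r matrices with ‖V'‖₂ ≤ 1, and suppose ‖U − U'‖_F + ‖V − V'‖_F ≤ (2√2/κ)·‖M − M'‖_F. Define W = (1 − ηλ)·W₀ − η·U·Vᵀ and W' = (1 − ηλ)·W₀' − η·U'·(V')ᵀ. Then ‖W − W'‖_F ≤ (1 − ηλ)·‖W₀ − W₀'‖_F + (2√2·η/κ)·‖M − M'‖_F. -/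
/-!
Writing `W - W' = (1 - ηλ)(W₀ - W₀') - η(UVᵀ - U'V'ᵀ)` and
`UVᵀ - U'V'ᵀ = U(V - V')ᵀ + (U - U')V'ᵀ`, the mixed submultiplicativity
`‖AB‖_F ≤ ‖A‖₂‖B‖_F` (and its transpose) together with `‖U‖₂, ‖V'‖₂ ≤ 1` bounds the
orthogonalized part by `‖U - U'‖_F + ‖V - V'‖_F`, to which the Davis–Kahan bound applies.
The mixed inequality holds row by row: the Frobenius norm is the ℓ² norm of the row norms,
and each row of `AB` is a row of `A` multiplied by `B`.
-/

open Matrix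

/-- Frobenius norm of a real matrix: `√ tr(Aᵀ A)`. -/
noncomputable def frobNorm {m n : ℕ} (A : Matrix (Fin m) (Fin n) ℝ) : ℝ :=
  Real.sqrt ((Aᵀ * A).trace)

/-- Spectral norm of a real matrix: the operator norm induced by Euclidean norms. -/
noncomputable def specNorm {m n : ℕ} (A : Matrix (Fin m) (Fin n) ℝ) : ℝ :=
  ‖LinearMap.toContinuousLinearMap (Matrix.toEuclideanLin A)‖

open WithLp

open scoped Matrix.Norms.Frobenius

namespace Matrix

variable {𝕜 : Type*} [RCLike 𝕜] {l m n : Type*} [Fintype l] [Fintype m] [Fintype n]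

theorem frobenius_norm_eq_sqrt_sum_row (A : Matrix m n 𝕜) :
    ‖A‖ = √(∑ i, ‖toLp 2 (A i)‖ ^ 2) :=
  PiLp.norm_eq_of_L2 (toLp 2 fun i => toLp 2 (A i))

theorem frobenius_norm_mul_le_of_vecMul_le (A : Matrix l m 𝕜) (B : Matrix m n 𝕜) {c : ℝ}
    (hc : 0 ≤ c) (hB : ∀ x : m → 𝕜, ‖toLp 2 (x ᵥ* B)‖ ≤ c * ‖toLp 2 x‖) :
    ‖A * B‖ ≤ ‖A‖ * c := by
  rw [frobenius_norm_eq_sqrt_sum_row, frobenius_norm_eq_sqrt_sum_row, mul_comm,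
    ← Real.sqrt_sq hc, ← Real.sqrt_mul (sq_nonneg c), Finset.mul_sum]
  gcongr with i
  rw [← mul_pow]
  exact pow_le_pow_left₀ (norm_nonneg _) (hB (A i)) 2

end Matrix

section

variable {l m n : ℕ}

theorem frobNorm_eq_norm (A : Matrix (Fin m) (Fin n) ℝ) : frobNorm A = ‖A‖ := by
  rw [frobNorm, frobenius_norm_eq_sqrt_sum_row, ← trace_transpose_mul]
  congr 1
  refine Finset.sum_congr rfl fun i _ => ?_
  rw [EuclideanSpace.norm_sq_eq]
  simp [mul_apply, sq]

theorem specNorm_nonneg (A : Matrix (Fin m) (Fin n) ℝ) : 0 ≤ specNorm A :=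
  norm_nonneg _

open scoped Matrix.Norms.L2Operator in
theorem specNorm_transpose (A : Matrix (Fin m) (Fin n) ℝ) : specNorm Aᵀ = specNorm A :=
  l2_opNorm_conjTranspose A

theorem norm_vecMul_le_specNorm (B : Matrix (Fin m) (Fin n) ℝ) (x : Fin m → ℝ) :
    ‖toLp 2 (x ᵥ* B)‖ ≤ specNorm B * ‖toLp 2 x‖ := by
  rw [← mulVec_transpose, ← specNorm_transpose]
  exact (toEuclideanLin Bᵀ).toContinuousLinearMap.le_opNorm (toLp 2 x)

theorem frobenius_norm_mul_le_mul_specNorm (A : Matrix (Fin l) (Fin m) ℝ)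
    (B : Matrix (Fin m) (Fin n) ℝ) : ‖A * B‖ ≤ ‖A‖ * specNorm B :=
  frobenius_norm_mul_le_of_vecMul_le A B (specNorm_nonneg B) (norm_vecMul_le_specNorm B)

theorem frobenius_norm_mul_le_specNorm_mul (A : Matrix (Fin l) (Fin m) ℝ)
    (B : Matrix (Fin m) (Fin n) ℝ) : ‖A * B‖ ≤ specNorm A * ‖B‖ := by
  rw [← frobenius_norm_transpose, transpose_mul, ← specNorm_transpose A, mul_comm,
    ← frobenius_norm_transpose B]
  exact frobenius_norm_mul_le_mul_specNorm Bᵀ Aᵀ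

theorem frobenius_norm_mul_transpose_sub_le {r : ℕ} (U U' : Matrix (Fin m) (Fin r) ℝ)
    (V V' : Matrix (Fin n) (Fin r) ℝ) :
    ‖U * Vᵀ - U' * V'ᵀ‖ ≤ specNorm U * ‖V - V'‖ + ‖U - U'‖ * specNorm V' := by
  have hsplit : U * Vᵀ - U' * V'ᵀ = U * (V - V')ᵀ + (U - U') * V'ᵀ := by
    rw [transpose_sub, Matrix.mul_sub, Matrix.sub_mul]
    abel
  calc ‖U * Vᵀ - U' * V'ᵀ‖ ≤ ‖U * (V - V')ᵀ‖ + ‖(U - U') * V'ᵀ‖ := hsplit ▸ norm_add_le _ _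
    _ ≤ specNorm U * ‖(V - V')ᵀ‖ + ‖U - U'‖ * specNorm V'ᵀ :=
      add_le_add (frobenius_norm_mul_le_specNorm_mul _ _)
        (frobenius_norm_mul_le_mul_specNorm _ _)
    _ = specNorm U * ‖V - V'‖ + ‖U - U'‖ * specNorm V' := by
      rw [frobenius_norm_transpose, specNorm_transpose]

end

theorem stmt_2_general {m n r : ℕ} (η lam κ : ℝ) (hη : 0 < η) (hηlam : η * lam ≤ 1)
    (W₀ W₀' M M' : Matrix (Fin m) (Fin n) ℝ)
    (U U' : Matrix (Fin m) (Fin r) ℝ) (V V' : Matrix (Fin n) (Fin r) ℝ)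
    (hU : specNorm U ≤ 1) (hV' : specNorm V' ≤ 1)
    (hDK : frobNorm (U - U') + frobNorm (V - V') ≤ (2 * Real.sqrt 2 / κ) * frobNorm (M - M'))
    (W W' : Matrix (Fin m) (Fin n) ℝ)
    (hW : W = (1 - η * lam) • W₀ - η • (U * Vᵀ))
    (hW' : W' = (1 - η * lam) • W₀' - η • (U' * V'ᵀ)) :
    frobNorm (W - W') ≤
      (1 - η * lam) * frobNorm (W₀ - W₀') + (2 * Real.sqrt 2 * η / κ) * frobNorm (M - M') := by
  simp only [frobNorm_eq_norm] at hDK ⊢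
  have hdiff : W - W' = (1 - η * lam) • (W₀ - W₀') - η • (U * Vᵀ - U' * V'ᵀ) := by
    rw [hW, hW', smul_sub, smul_sub]
    abel
  have hUV : ‖U * Vᵀ - U' * V'ᵀ‖ ≤ ‖U - U'‖ + ‖V - V'‖ := by
    exact (frobenius_norm_mul_transpose_sub_le U U' V V').trans <|
      (add_le_add (mul_le_of_le_one_left (norm_nonneg _) hU)
      (mul_le_of_le_one_right (norm_nonneg _) hV')).trans_eq (add_comm _ _)
  calc ‖W - W'‖ ≤ (1 - η * lam) * ‖W₀ - W₀'‖ + η * ‖U * Vᵀ - U' * V'ᵀ‖ := by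
        rw [hdiff]
        refine (norm_sub_le _ _).trans_eq ?_
        rw [norm_smul, norm_smul, Real.norm_of_nonneg (by linarith), Real.norm_of_nonneg hη.le]
    _ ≤ (1 - η * lam) * ‖W₀ - W₀'‖ + η * ((2 * Real.sqrt 2 / κ) * ‖M - M'‖) := by
        gcongr
        exact hUV.trans hDK
    _ = (1 - η * lam) * ‖W₀ - W₀'‖ + (2 * Real.sqrt 2 * η / κ) * ‖M - M'‖ := by ring

/-- One-step stability contraction of the orthogonalized (Muon) update. -/
theorem stmt_2 {m n r : ℕ} (η lam κ : ℝ) (hη : 0 < η) (hlam : 0 ≤ lam) (hηlam : η * lam ≤ 1)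
    (hκ : 0 < κ)
    (W₀ W₀' M M' : Matrix (Fin m) (Fin n) ℝ)
    (U U' : Matrix (Fin m) (Fin r) ℝ) (V V' : Matrix (Fin n) (Fin r) ℝ)
    (hU : specNorm U ≤ 1) (hV' : specNorm V' ≤ 1)
    (hDK : frobNorm (U - U') + frobNorm (V - V') ≤ (2 * Real.sqrt 2 / κ) * frobNorm (M - M'))
    (W W' : Matrix (Fin m) (Fin n) ℝ)
    (hW : W = (1 - η * lam) • W₀ - η • (U * Vᵀ))
    (hW' : W' = (1 - η * lam) • W₀' - η • (U' * V'ᵀ)) :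
    frobNorm (W - W') ≤
      (1 - η * lam) * frobNorm (W₀ - W₀') + (2 * Real.sqrt 2 * η / κ) * frobNorm (M - M') :=
  stmt_2_general η lam κ hη hηlam W₀ W₀' M M' U U' V V' hU hV' hDK W W' hW hW'
end

section
/- Let H be a real inner product space, β ∈ (0, 1], and x, y, z ∈ H with ⟪x + y, z⟫ = 0. Then ‖(1−β)·(x + y) + β·z‖² ≤ (1−β)·‖x‖² + (2/β)·‖y‖² + β²·‖z‖². -/
open scoped RealInnerProductSpace

/-- One-step contraction of the momentum deviation: in a real inner product space,
if `⟪x + y, z⟫ = 0` and `β ∈ (0,1]`, then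
`‖(1−β)(x+y) + βz‖² ≤ (1−β)‖x‖² + (2/β)‖y‖² + β²‖z‖²`. -/
theorem stmt_8 {H : Type*} [NormedAddCommGroup H] [InnerProductSpace ℝ H]
    (β : ℝ) (hβ0 : 0 < β) (hβ1 : β ≤ 1) (x y z : H) (horth : ⟪x + y, z⟫ = 0) :
    ‖(1 - β) • (x + y) + β • z‖ ^ 2 ≤
      (1 - β) * ‖x‖ ^ 2 + (2 / β) * ‖y‖ ^ 2 + β ^ 2 * ‖z‖ ^ 2 := by
  have hz : ‖(1 - β) • (x + y) + β • z‖ ^ 2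
      = (1 - β) ^ 2 * ‖x + y‖ ^ 2 + β ^ 2 * ‖z‖ ^ 2 := by
    rw [norm_add_sq_real, norm_smul, norm_smul, real_inner_smul_left,
      real_inner_smul_right, horth]
    rw [Real.norm_eq_abs, Real.norm_eq_abs]
    rw [mul_pow, mul_pow, sq_abs, sq_abs]
    ring
  have h1 : ‖x + y‖ ^ 2 = ‖x‖ ^ 2 + 2 * ⟪x, y⟫ + ‖y‖ ^ 2 := by
    rw [norm_add_sq_real]
  have h2 : ⟪x, y⟫ ≤ ‖x‖ * ‖y‖ := real_inner_le_norm x y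
  have h3 : 2 * β * ⟪x, y⟫ ≤ β ^ 2 * ‖x‖ ^ 2 + ‖y‖ ^ 2 := by
    nlinarith [sq_nonneg (β * ‖x‖ - ‖y‖), mul_le_mul_of_nonneg_left h2 hβ0.le]
  rw [hz]
  have h4 : ((1 - β) ^ 2 * ‖x + y‖ ^ 2 - (1 - β) * ‖x‖ ^ 2) * β ≤ 2 * ‖y‖ ^ 2 := by
    rw [h1]
    have hb : 0 ≤ 1 - β := by linarith
    nlinarith [mul_le_mul_of_nonneg_left h3 (sq_nonneg (1 - β)),
      mul_nonneg (mul_nonneg (sq_nonneg β) hb) (sq_nonneg ‖x‖),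
      mul_nonneg (mul_nonneg (sq_nonneg β) hb) (sq_nonneg ‖y‖),
      mul_nonneg (mul_nonneg (mul_nonneg hβ0.le (sq_nonneg β)) hb) (sq_nonneg ‖x‖),
      mul_nonneg hb (sq_nonneg ‖y‖), sq_nonneg ‖y‖]
  have h5 : (1 - β) ^ 2 * ‖x + y‖ ^ 2 - (1 - β) * ‖x‖ ^ 2 ≤ 2 * ‖y‖ ^ 2 / β :=
    (le_div_iff₀ hβ0).mpr h4
  have h6 : (2 / β) * ‖y‖ ^ 2 = 2 * ‖y‖ ^ 2 / β := by ring
  linarith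
end

section
/- Let β ∈ (0, 1], L ≥ 0, σ ≥ 0, η ≥ 0, κ ∈ (0, 1], N > 0, a ≥ 0, b ≥ 0, and let c be a real with 0 ≤ c ≤ 1 (playing the role of ηλ). Let (ψ_t)_{t≥1} and (φ_t)_{t≥1} be sequences of nonnegative reals with ψ₁ ≤ a/N and φ₁ ≤ b/(N·κ), and for all t ≥ 1: ψ_{t+1} ≤ (1−β)·ψ_t + β·L·φ_t + 2βσ/N and φ_{t+1} ≤ (1−c)·φ_t + (2√2·η/κ)·ψ_{t+1}. Set Q = 2 + (1 + βL)·(1 + 2√2·η). Then for all t ≥ 1, φ_t ≤ Q^t·(a + b + 2βσ)/(N·κ^t). -/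
/-!
Normalise by `E = (a + b + 2βσ)/N` and `r = Q/κ`. Dropping the contraction factors `1 - β` and
`1 - c`, induction on `t` gives `ψ_{t+1} ≤ (1 + βL) r^t E` together with `φ_{t+1} ≤ r^{t+1} E`:
the choice of `Q` makes `r ≥ 2 + βL` absorb the ψ-recursion and `r ≥ 1 + (2√2η/κ)(1 + βL)`
absorb the φ-recursion.
-/

theorem coupled_recursion_le_geometric {ℓ k E r : ℝ} {x y : ℕ → ℝ}
    (hℓ : 0 ≤ ℓ) (hk : 0 ≤ k) (hE : 0 ≤ E) (hr_x : 2 + ℓ ≤ r) (hr_y : 1 + k * (1 + ℓ) ≤ r)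
    (hx₀ : x 0 ≤ (1 + ℓ) * E) (hy₀ : y 0 ≤ r * E)
    (hx : ∀ n, x (n + 1) ≤ x n + ℓ * y n + E)
    (hy : ∀ n, y (n + 1) ≤ y n + k * x (n + 1)) :
    ∀ n, x n ≤ (1 + ℓ) * r ^ n * E ∧ y n ≤ r ^ (n + 1) * E := by
  intro n
  induction n with
  | zero => simpa using ⟨hx₀, hy₀⟩
  | succ n ih =>
    obtain ⟨ihx, ihy⟩ := ih
    have hrn : 1 ≤ r ^ n := one_le_pow₀ (by linarith)
    have hrnE : 0 ≤ r ^ n * E := mul_nonneg (by linarith) hE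
    have hx' : x (n + 1) ≤ (1 + ℓ) * r ^ (n + 1) * E :=
      calc x (n + 1) ≤ (1 + ℓ) * r ^ n * E + ℓ * (r ^ (n + 1) * E) + 1 * E := by
            linarith [hx n, mul_le_mul_of_nonneg_left ihy hℓ]
        _ ≤ (1 + ℓ) * r ^ n * E + ℓ * (r ^ (n + 1) * E) + r ^ n * E := by gcongr
        _ = (2 + ℓ) * (r ^ n * E) + ℓ * (r ^ (n + 1) * E) := by ring
        _ ≤ r * (r ^ n * E) + ℓ * (r ^ (n + 1) * E) := by gcongr
        _ = (1 + ℓ) * r ^ (n + 1) * E := by ring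
    refine ⟨hx', ?_⟩
    have hrn1E : 0 ≤ r ^ (n + 1) * E := mul_nonneg (pow_nonneg (by linarith) _) hE
    calc y (n + 1) ≤ r ^ (n + 1) * E + k * ((1 + ℓ) * r ^ (n + 1) * E) := by
          linarith [hy n, mul_le_mul_of_nonneg_left hx' hk]
      _ = (1 + k * (1 + ℓ)) * (r ^ (n + 1) * E) := by ring
      _ ≤ r * (r ^ (n + 1) * E) := by gcongr
      _ = r ^ (n + 1 + 1) * E := by ring

theorem coupling_rate_bounds {ℓ h κ : ℝ} (hℓ : 0 ≤ ℓ) (hh : 0 ≤ h) (hκ0 : 0 < κ)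
    (hκ1 : κ ≤ 1) :
    2 + ℓ ≤ (2 + (1 + ℓ) * (1 + h)) / κ ∧ 1 + h / κ * (1 + ℓ) ≤ (2 + (1 + ℓ) * (1 + h)) / κ := by
  have hQ : 2 + (1 + ℓ) * (1 + h) ≤ (2 + (1 + ℓ) * (1 + h)) / κ :=
    le_div_self (by positivity) hκ0 hκ1
  refine ⟨by nlinarith, ?_⟩
  rw [show 1 + h / κ * (1 + ℓ) = (κ + h * (1 + ℓ)) / κ by field_simp]
  exact div_le_div_of_nonneg_right (by nlinarith) hκ0.le

theorem stmt_13_general (β L σ η κ N a b c : ℝ)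
    (hβ0 : 0 < β) (hL : 0 ≤ L) (hσ : 0 ≤ σ) (hη : 0 ≤ η)
    (hκ0 : 0 < κ) (hκ1 : κ ≤ 1) (hN : 0 < N) (ha : 0 ≤ a) (hb : 0 ≤ b)
    (hc0 : 0 ≤ c)
    (ψ φ : ℕ → ℝ)
    (hψ : ∀ t, 1 ≤ t → 0 ≤ ψ t) (hφ : ∀ t, 1 ≤ t → 0 ≤ φ t)
    (hψ1 : ψ 1 ≤ a / N) (hφ1 : φ 1 ≤ b / (N * κ))
    (hψrec : ∀ t, 1 ≤ t → ψ (t + 1) ≤ (1 - β) * ψ t + β * L * φ t + 2 * β * σ / N)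
    (hφrec : ∀ t, 1 ≤ t → φ (t + 1) ≤ (1 - c) * φ t + (2 * Real.sqrt 2 * η / κ) * ψ (t + 1))
    (Q : ℝ) (hQ : Q = 2 + (1 + β * L) * (1 + 2 * Real.sqrt 2 * η)) :
    ∀ t, 1 ≤ t → φ t ≤ Q ^ t * (a + b + 2 * β * σ) / (N * κ ^ t) := by
  subst hQ
  set S := a + b + 2 * β * σ
  have hβσ : 0 ≤ 2 * β * σ := by positivity
  have hβL : 0 ≤ β * L := mul_nonneg hβ0.le hL
  obtain ⟨hr_x, hr_y⟩ := coupling_rate_bounds hβL (by positivity : 0 ≤ 2 * √2 * η) hκ0 hκ1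
  have hψ₀ : ψ 1 ≤ (1 + β * L) * (S / N) :=
    hψ1.trans <| (div_le_div_of_nonneg_right (by linarith) hN.le).trans
      (le_mul_of_one_le_left (by positivity) (by linarith))
  have hφ₀ : φ 1 ≤ (2 + (1 + β * L) * (1 + 2 * √2 * η)) / κ * (S / N) :=
    calc φ 1 ≤ 1 / κ * (b / N) := hφ1.trans_eq (by ring)
      _ ≤ 1 / κ * (S / N) := by gcongr; linarith
      _ ≤ _ := by gcongr; linarith [show 0 ≤ (1 + β * L) * (1 + 2 * √2 * η) by positivity]
  have hσS : 2 * β * σ / N ≤ S / N := by gcongr; linarith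
  have key := coupled_recursion_le_geometric (x := fun n ↦ ψ (n + 1)) (y := fun n ↦ φ (n + 1))
    (E := S / N) hβL (by positivity) (by positivity) hr_x hr_y hψ₀ hφ₀
    (fun n ↦ by
      have := mul_le_of_le_one_left (hψ (n + 1) (by omega)) (by linarith : 1 - β ≤ 1)
      linarith [hψrec (n + 1) (by omega)])
    (fun n ↦ by
      have := mul_le_of_le_one_left (hφ (n + 1) (by omega)) (by linarith : 1 - c ≤ 1)
      linarith [hφrec (n + 1) (by omega)])
  intro t ht
  obtain ⟨n, rfl⟩ := Nat.exists_eq_add_of_le' ht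
  exact (key n).2.trans_eq (by rw [div_pow]; field_simp)

/-- Coupled stability recursion at the core of the paper's Theorem 1
(generalization error of the Muon optimizer): the parameter-difference bound
`φ_t ≤ Q^t·(a + b + 2βσ)/(N·κ^t)` for all `t ≥ 1`. -/
theorem stmt_13 (β L σ η κ N a b c : ℝ)
    (hβ0 : 0 < β) (hβ1 : β ≤ 1) (hL : 0 ≤ L) (hσ : 0 ≤ σ) (hη : 0 ≤ η)
    (hκ0 : 0 < κ) (hκ1 : κ ≤ 1) (hN : 0 < N) (ha : 0 ≤ a) (hb : 0 ≤ b)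
    (hc0 : 0 ≤ c) (hc1 : c ≤ 1)
    (ψ φ : ℕ → ℝ)
    (hψ : ∀ t, 1 ≤ t → 0 ≤ ψ t) (hφ : ∀ t, 1 ≤ t → 0 ≤ φ t)
    (hψ1 : ψ 1 ≤ a / N) (hφ1 : φ 1 ≤ b / (N * κ))
    (hψrec : ∀ t, 1 ≤ t → ψ (t + 1) ≤ (1 - β) * ψ t + β * L * φ t + 2 * β * σ / N)
    (hφrec : ∀ t, 1 ≤ t → φ (t + 1) ≤ (1 - c) * φ t + (2 * Real.sqrt 2 * η / κ) * ψ (t + 1))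
    (Q : ℝ) (hQ : Q = 2 + (1 + β * L) * (1 + 2 * Real.sqrt 2 * η)) :
    ∀ t, 1 ≤ t → φ t ≤ Q ^ t * (a + b + 2 * β * σ) / (N * κ ^ t) :=
  stmt_13_general β L σ η κ N a b c hβ0 hL hσ hη hκ0 hκ1 hN ha hb hc0 ψ φ hψ hφ hψ1 hφ1 hψrec hφrec
    Q hQ
end

section
/- Let β ∈ (0, 1], L > 0, σ ≥ 0, N > 0, η > 0, and let T ≥ 1 be a natural number with η·T ≤ 1. Let c be a real with 0 ≤ c ≤ 1 (playing the role of ηλ). Let (ψ_t)_{1≤t≤T} and (φ_t)_{1≤t≤T} be nonnegative reals with ψ₁ ≤ 2βσ/N and φ₁ ≤ 4√2·β·η·σ/N, and for all 1 ≤ t < T: ψ_{t+1} ≤ (1−β)·ψ_t + β·L·φ_t + 2βσ/N and φ_{t+1} ≤ (1−c)·φ_t + 2√2·η·ψ_{t+1}. Then φ_T ≤ e^{2√2·L}·(4√2·σ + 4σ/L)/N. -/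
set_option maxHeartbeats 1600000 in
/-- Coupled stability recursion at the core of the paper's Theorem 2
(generalization error of the MiMuon optimizer with step size `η = 1/T`):
the conclusion `φ_T ≤ e^{2√2 L}·(4√2σ + 4σ/L)/N` yields the `O(1/N)` stability bound. -/
theorem stmt_15 (β L σ N η : ℝ) (T : ℕ)
    (hβ0 : 0 < β) (hβ1 : β ≤ 1) (hL : 0 < L) (hσ : 0 ≤ σ) (hN : 0 < N)
    (hη : 0 < η) (hT : 1 ≤ T) (hηT : η * (T : ℝ) ≤ 1)
    (c : ℝ) (hc0 : 0 ≤ c) (hc1 : c ≤ 1)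
    (ψ φ : ℕ → ℝ)
    (hψ : ∀ t, 1 ≤ t → t ≤ T → 0 ≤ ψ t) (hφ : ∀ t, 1 ≤ t → t ≤ T → 0 ≤ φ t)
    (hψ1 : ψ 1 ≤ 2 * β * σ / N) (hφ1 : φ 1 ≤ 4 * Real.sqrt 2 * β * η * σ / N)
    (hψrec : ∀ t, 1 ≤ t → t < T →
      ψ (t + 1) ≤ (1 - β) * ψ t + β * L * φ t + 2 * β * σ / N)
    (hφrec : ∀ t, 1 ≤ t → t < T →
      φ (t + 1) ≤ (1 - c) * φ t + 2 * Real.sqrt 2 * η * ψ (t + 1)) :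
    φ T ≤ Real.exp (2 * Real.sqrt 2 * L) * (4 * Real.sqrt 2 * σ + 4 * σ / L) / N := by
  obtain ⟨s, hs⟩ : ∃ s, Real.sqrt 2 = s := ⟨_, rfl⟩
  rw [hs] at hφ1 hφrec ⊢
  have hs0 : (0:ℝ) < s := hs ▸ Real.sqrt_pos.mpr (by norm_num)
  have hT1 : (1:ℝ) ≤ (T:ℝ) := by exact_mod_cast hT
  have hη1 : η ≤ 1 := by nlinarith
  obtain ⟨q, hqdef⟩ : ∃ q : ℝ, 1 + 2*s*η*L = q := ⟨_, rfl⟩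
  have hq1 : (1:ℝ) ≤ q := by nlinarith [mul_pos (mul_pos (mul_pos (by norm_num : (0:ℝ)<2) hs0) hη) hL]
  have hq0 : (0:ℝ) ≤ q := by linarith
  obtain ⟨D, hDdef⟩ : ∃ D : ℝ, 2*σ/(L*N) = D := ⟨_, rfl⟩
  obtain ⟨C, hCdef⟩ : ∃ C : ℝ, 4*s*η*σ/N + D = C := ⟨_, rfl⟩
  have hD0 : 0 ≤ D := hDdef ▸ by positivity
  have hr0 : (0:ℝ) ≤ 4*s*η*σ/N := by positivity
  have hC0 : 0 ≤ C := hCdef ▸ by linarith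
  have hqD : q * D = D + 4*s*η*σ/N := by
    rw [← hqdef, ← hDdef]
    field_simp
    ring
  have key : ∀ n, n + 1 ≤ T →
      ψ (n+1) ≤ L * (q^n * C - D) + 2*σ/N ∧ φ (n+1) ≤ q^n * C - D := by
    intro n
    induction n with
    | zero =>
      intro _
      have hCD : q^0 * C - D = 4*s*η*σ/N := by rw [← hCdef]; ring
      rw [hCD]
      constructor
      · have h2 : 2*β*σ/N ≤ 2*σ/N := by
          gcongr
          nlinarith
        have h3 : 0 ≤ L * (4*s*η*σ/N) := by positivity
        linarith
      · calc φ 1 ≤ 4*s*β*η*σ/N := hφ1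
          _ ≤ 4*s*η*σ/N := by
            have hb : 4*s*β*η*σ ≤ 4*s*η*σ := by
              nlinarith [mul_nonneg (mul_nonneg hs0.le hη.le) hσ]
            gcongr
    | succ n ih =>
      intro hle
      have hn1T : n + 1 ≤ T := by omega
      have hnT : n + 1 < T := by omega
      obtain ⟨ihψ, ihφ⟩ := ih hn1T
      obtain ⟨A, hA⟩ : ∃ A : ℝ, q^n * C - D = A := ⟨_, rfl⟩
      rw [hA] at ihψ ihφ
      have hA0 : 0 ≤ A := le_trans (hφ (n+1) (by omega) hn1T) ihφ
      have hA' : q^(n+1) * C - D = q * A + 4*s*η*σ/N := by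
        rw [← hA, mul_sub, pow_succ, hqD]; ring
      have hψn2 : ψ (n+1+1) ≤ L * A + 2*σ/N := by
        have h1 := hψrec (n+1) (by omega) hnT
        have h2 : (1-β) * ψ (n+1) ≤ (1-β) * (L * A + 2*σ/N) :=
          mul_le_mul_of_nonneg_left ihψ (by linarith)
        have h3 : β * L * φ (n+1) ≤ β * L * A :=
          mul_le_mul_of_nonneg_left ihφ (by positivity)
        have h5 : (1-β)*(L*A + 2*σ/N) + β*L*A + 2*β*σ/N = L*A + 2*σ/N := by ring
        linarith
      have hAA : A ≤ q * A + 4*s*η*σ/N := by nlinarith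
      constructor
      · rw [hA']
        have hLA : L * A ≤ L * (q * A + 4*s*η*σ/N) :=
          mul_le_mul_of_nonneg_left hAA hL.le
        linarith
      · rw [hA']
        have h1 := hφrec (n+1) (by omega) hnT
        have h2 : (1-c) * φ (n+1) ≤ φ (n+1) := by
          nlinarith [hφ (n+1) (by omega) hn1T]
        have h3 : 2*s*η * ψ (n+1+1) ≤ 2*s*η * (L * A + 2*σ/N) :=
          mul_le_mul_of_nonneg_left hψn2 (by positivity)
        have heq : A + 2*s*η*(L*A + 2*σ/N) = q * A + 4*s*η*σ/N := by
          rw [← hqdef]; ring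
        linarith
  obtain ⟨-, hφT⟩ := key (T-1) (by omega)
  rw [Nat.sub_add_cancel hT] at hφT
  have hqpow : q^(T-1) ≤ Real.exp (2*s*L) := by
    calc q^(T-1) ≤ (Real.exp (2*s*η*L))^(T-1) := by
          apply pow_le_pow_left₀ hq0
          linarith [Real.add_one_le_exp (2*s*η*L)]
      _ = Real.exp (((T-1 : ℕ) : ℝ) * (2*s*η*L)) := by
          rw [← Real.exp_nat_mul]
      _ ≤ Real.exp (2*s*L) := by
          apply Real.exp_le_exp.mpr
          have hcast : ((T-1 : ℕ) : ℝ) = (T:ℝ) - 1 := by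
            push_cast [Nat.cast_sub hT]
            ring
          rw [hcast]
          have hηT1 : η * ((T:ℝ) - 1) ≤ 1 := by nlinarith
          nlinarith [mul_nonneg hη.le (by linarith : (0:ℝ) ≤ (T:ℝ)-1), mul_pos hs0 hL]
  have hCle : C ≤ (4*s*σ + 4*σ/L)/N := by
    have hC' : C = (4*s*η*σ + 2*σ/L)/N := by
      rw [← hCdef, ← hDdef]
      field_simp
    rw [hC']
    have h1 : 4*s*η*σ ≤ 4*s*σ := by nlinarith [mul_nonneg hs0.le hσ]
    have h2 : 2*σ/L ≤ 4*σ/L := by gcongr <;> linarith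
    have h3 : 4*s*η*σ + 2*σ/L ≤ 4*s*σ + 4*σ/L := by linarith
    gcongr
  calc φ T ≤ q^(T-1) * C - D := hφT
    _ ≤ q^(T-1) * C := by linarith
    _ ≤ Real.exp (2*s*L) * ((4*s*σ + 4*σ/L)/N) :=
        mul_le_mul hqpow hCle hC0 (Real.exp_nonneg _)
    _ = Real.exp (2*s*L) * (4*s*σ + 4*σ/L)/N := by ring
end

section
/- Let η > 0, λ ≥ 0 with η·λ ≤ 1, β ∈ (0, 1], L > 0, σ ≥ 0, N > 0, and let T ≥ 1 be a natural number with η·T ≤ 1. Let W_t, W_t', M_t, M_t' (0 ≤ t ≤ T) be real m×n matrices with W₀ = W₀' and M₀ = M₀', and suppose for each 1 ≤ t ≤ T: (i) ‖W_t − W_t'‖_F ≤ (1 − ηλ)·‖W_{t−1} − W_{t−1}'‖_F + 2√2·η·‖M_t − M_t'‖_F; (ii) ‖M_t − M_t'‖_F ≤ (1−β)·‖M_{t−1} − M_{t−1}'‖_F + β·L·‖W_{t−1} − W_{t−1}'‖_F + 2βσ/N. Then ‖W_T − W_T'‖_F ≤ e^{2√2·L}·(4√2·σ + 4σ/L)/N.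 -/
open Matrix

lemma auxM_step (β L K P a b bt s : ℝ)
    (hβ0 : 0 < β) (hβ1 : β ≤ 1) (hL : 0 < L)
    (ha : a ≤ K * (P - 1)) (hb : b ≤ L * K * (P - 1) + s)
    (hMr : bt ≤ (1 - β) * b + β * L * a + β * s) :
    bt ≤ L * K * (P - 1) + s := by
  nlinarith [mul_nonneg (by linarith : (0:ℝ) ≤ 1 - β) (sub_nonneg.2 hb),
    mul_nonneg (mul_nonneg hβ0.le hL.le) (sub_nonneg.2 ha)]

lemma auxW_step (u c η L K P s a bt w : ℝ)
    (hu : 0 ≤ u) (ha0 : 0 ≤ a) (hc : 0 ≤ c) (hη : 0 ≤ η)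
    (ha : a ≤ K * (P - 1)) (hbt : bt ≤ L * K * (P - 1) + s)
    (hW : w ≤ (1 - u) * a + c * η * bt) :
    w ≤ K * (P - 1) + c * η * (L * K * (P - 1) + s) := by
  nlinarith [mul_nonneg hu ha0, mul_nonneg (mul_nonneg hc hη) (sub_nonneg.2 hbt)]

set_option maxHeartbeats 1000000 in
/-- Deterministic trajectory form of the paper's Theorem 2: with step size
`η = 1/T`, two coupled MiMuon trajectories on neighboring datasets satisfy the
`O(1/N)` stability bound `‖W_T − W_T'‖_F ≤ e^{2√2 L}·(4√2σ + 4σ/L)/N`. -/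
theorem stmt_17 {m n : ℕ} (η lam β L σ N : ℝ) (T : ℕ)
    (hη : 0 < η) (hlam0 : 0 ≤ lam) (hηlam : η * lam ≤ 1)
    (hβ0 : 0 < β) (hβ1 : β ≤ 1) (hL : 0 < L) (hσ : 0 ≤ σ) (hN : 0 < N)
    (hT : 1 ≤ T) (hηT : η * (T : ℝ) ≤ 1)
    (W W' M M' : ℕ → Matrix (Fin m) (Fin n) ℝ)
    (hW0 : W 0 = W' 0) (hM0 : M 0 = M' 0)
    (hWrec : ∀ t, 1 ≤ t → t ≤ T →
      frobNorm (W t - W' t) ≤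
        (1 - η * lam) * frobNorm (W (t - 1) - W' (t - 1)) +
          2 * Real.sqrt 2 * η * frobNorm (M t - M' t))
    (hMrec : ∀ t, 1 ≤ t → t ≤ T →
      frobNorm (M t - M' t) ≤
        (1 - β) * frobNorm (M (t - 1) - M' (t - 1)) +
          β * L * frobNorm (W (t - 1) - W' (t - 1)) + 2 * β * σ / N) :
    frobNorm (W T - W' T) ≤
      Real.exp (2 * Real.sqrt 2 * L) * (4 * Real.sqrt 2 * σ + 4 * σ / L) / N := by
  have hs2 : (0:ℝ) < Real.sqrt 2 := Real.sqrt_pos.2 (by norm_num)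
  set c : ℝ := 2 * Real.sqrt 2 with hc
  have hc0 : 0 < c := by positivity
  set K : ℝ := 2 * σ / (N * L) with hKdef
  have hK0 : 0 ≤ K := by positivity
  have hLK : L * K = 2 * σ / N := by rw [hKdef]; field_simp
  set q : ℝ := 1 + c * η * L with hqdef
  have hq1 : 1 ≤ q := by nlinarith [mul_pos (mul_pos hc0 hη) hL]
  have hfnn : ∀ A : Matrix (Fin m) (Fin n) ℝ, 0 ≤ frobNorm A :=
    fun A => Real.sqrt_nonneg _
  have key : ∀ t, t ≤ T →
      frobNorm (W t - W' t) ≤ K * (q ^ t - 1) ∧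
      frobNorm (M t - M' t) ≤ L * K * (q ^ t - 1) + 2 * σ / N := by
    intro t
    induction t with
    | zero =>
      intro _
      have h1 : W 0 - W' 0 = 0 := by rw [hW0, sub_self]
      have h2 : M 0 - M' 0 = 0 := by rw [hM0, sub_self]
      have hf0 : frobNorm (0 : Matrix (Fin m) (Fin n) ℝ) = 0 := by
        simp [frobNorm]
      constructor
      · rw [h1, hf0]; simp
      · rw [h2, hf0]; simp only [pow_zero, sub_self, mul_zero]; positivity
    | succ t ih =>
      intro hle
      have ht' : t ≤ T := Nat.le_of_succ_le hle
      obtain ⟨ha, hb⟩ := ih ht'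
      have h1 : 1 ≤ t + 1 := Nat.succ_le_succ (Nat.zero_le t)
      have hWr := hWrec (t+1) h1 hle
      have hMr := hMrec (t+1) h1 hle
      simp only [Nat.add_sub_cancel] at hWr hMr
      have hrw : 2 * β * σ / N = β * (2 * σ / N) := by ring
      rw [hrw] at hMr
      have hbt : frobNorm (M (t+1) - M' (t+1)) ≤ L * K * (q ^ t - 1) + 2 * σ / N :=
        auxM_step β L K (q ^ t) _ _ _ _ hβ0 hβ1 hL ha hb hMr
      refine ⟨?_, ?_⟩
      · have hat : frobNorm (W (t+1) - W' (t+1)) ≤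
            K * (q ^ t - 1) + c * η * (L * K * (q ^ t - 1) + 2 * σ / N) :=
          auxW_step (η * lam) c η L K (q ^ t) (2 * σ / N) _ _ _
            (mul_nonneg hη.le hlam0) (hfnn _) hc0.le hη.le ha hbt hWr
        have heq : K * (q ^ t - 1) + c * η * (L * K * (q ^ t - 1) + 2 * σ / N)
            = K * (q ^ (t+1) - 1) := by
          have h2 : 2 * σ / N = L * K := hLK.symm
          rw [h2, pow_succ, hqdef]; ring
        rw [heq] at hat
        exact hat
      · have hmono : q ^ t ≤ q ^ (t+1) := by
          have h0q : 0 ≤ q := by linarith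
          calc q ^ t = q ^ t * 1 := by ring
          _ ≤ q ^ t * q := by
              have := pow_nonneg h0q t
              nlinarith
          _ = q ^ (t+1) := by rw [pow_succ]
        have hLK0 : 0 ≤ L * K := mul_nonneg hL.le hK0
        nlinarith [mul_nonneg hLK0 (sub_nonneg.2 hmono)]
  obtain ⟨haT, _⟩ := key T le_rfl
  have hqexp : q ^ T ≤ Real.exp (c * L) := by
    have h1 : q ≤ Real.exp (c * η * L) := by
      have := Real.add_one_le_exp (c * η * L)
      rw [hqdef]; linarith
    have h2 : q ^ T ≤ Real.exp (c * η * L) ^ T :=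
      pow_le_pow_left₀ (by linarith) h1 T
    have h3 : Real.exp (c * η * L) ^ T = Real.exp ((T:ℝ) * (c * η * L)) := by
      rw [← Real.exp_nat_mul]
    have h4 : (T:ℝ) * (c * η * L) ≤ c * L := by
      have he : (T:ℝ) * (c * η * L) = c * L * (η * T) := by ring
      rw [he]
      nlinarith [mul_nonneg (mul_nonneg hc0.le hL.le) (sub_nonneg.2 hηT),
        mul_nonneg (mul_nonneg hc0.le hL.le) (mul_nonneg hη.le (Nat.cast_nonneg T))]
    calc q ^ T ≤ Real.exp ((T:ℝ) * (c * η * L)) := by rw [← h3]; exact h2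
    _ ≤ Real.exp (c * L) := Real.exp_le_exp.2 h4
  have hexp_pos : 0 < Real.exp (c * L) := Real.exp_pos _
  have hE1 : 1 ≤ Real.exp (c * L) := Real.one_le_exp (by positivity)
  set E : ℝ := Real.exp (c * L) with hE
  have step1 : K * (q ^ T - 1) ≤ K * E := by
    have hqT0 : 1 ≤ q ^ T := one_le_pow₀ hq1
    nlinarith
  have step2 : K * E = 2 * σ * E / (N * L) := by rw [hKdef]; ring
  have step3 : E * (4 * σ / L) / N = 4 * σ * E / (N * L) := by
    field_simp
  have step4 : 2 * σ * E / (N * L) ≤ 4 * σ * E / (N * L) := by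
    rw [div_le_div_iff₀ (by positivity) (by positivity)]
    nlinarith [mul_nonneg (mul_nonneg (mul_nonneg hσ hexp_pos.le) hN.le) hL.le]
  have step5 : E * (4 * Real.sqrt 2 * σ + 4 * σ / L) / N
      = E * (4 * Real.sqrt 2 * σ) / N + E * (4 * σ / L) / N := by ring
  have step6 : 0 ≤ E * (4 * Real.sqrt 2 * σ) / N := by positivity
  calc frobNorm (W T - W' T) ≤ K * (q ^ T - 1) := haT
  _ ≤ K * E := step1
  _ = 2 * σ * E / (N * L) := step2
  _ ≤ 4 * σ * E / (N * L) := step4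
  _ = E * (4 * σ / L) / N := step3.symm
  _ ≤ E * (4 * Real.sqrt 2 * σ + 4 * σ / L) / N := by rw [step5]; linarith
end
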